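/- arXiv:2402.08041 — 3 statements merged into one kernel-verified Lean document; each statement's English description precedes it below -/
import Mathlib

section
/- For square matrices A converging to zero, the symmetric positive-definite square root satisfies the quadratic estimate |(I + A)^{1/2} - I - (1/2)sym(A)| ≤ C|A|², where sym(A) = (A + Aᵀ)/2, for all A with |A| sufficiently small. -/
/-!
Put `E = S - 1`. Then `A = S * S - 1 = E * E + 2 • E`, so `S - 1 - A / 2 = -(E * E) / 2`
exactly and it suffices to show `‖E‖ ≤ ‖A‖`. As `S` is positive semidefinite,
`tr (E * E * S) = tr (E * S * E) ≥ 0`, hence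
`‖E‖² = tr (E * E) ≤ tr (E * (E * S + E)) = tr (E * A)`,
which is at most `‖E‖ * ‖A‖` by Cauchy–Schwarz. The bound thus holds with `C = 1/2`
for every `A`.
-/

open Matrix

attribute [local instance] Matrix.frobeniusNormedAddCommGroup Matrix.frobeniusNormedSpace

namespace Matrix

variable {m n : Type*} [Fintype m] [Fintype n]

theorem frobenius_norm_eq_sqrt (M : Matrix m n ℝ) :
    ‖M‖ = √(∑ p : m × n, M p.1 p.2 ^ 2) := by
  rw [frobenius_norm_def, Real.sqrt_eq_rpow, Fintype.sum_prod_type]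
  simp only [Real.norm_eq_abs, Real.rpow_two, sq_abs]

theorem trace_transpose_mul_eq_sum (M N : Matrix m n ℝ) :
    (Mᵀ * N).trace = ∑ p : m × n, M p.1 p.2 * N p.1 p.2 := by
  rw [Fintype.sum_prod_type, Finset.sum_comm]
  rfl

theorem frobenius_norm_sq_eq_trace (M : Matrix m n ℝ) : ‖M‖ ^ 2 = (Mᵀ * M).trace := by
  rw [frobenius_norm_eq_sqrt, Real.sq_sqrt (by positivity), trace_transpose_mul_eq_sum]
  simp only [sq]

theorem trace_transpose_mul_le_frobenius_norm_mul (M N : Matrix m n ℝ) :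
    (Mᵀ * N).trace ≤ ‖M‖ * ‖N‖ := by
  rw [trace_transpose_mul_eq_sum, frobenius_norm_eq_sqrt, frobenius_norm_eq_sqrt]
  exact Real.sum_mul_le_sqrt_mul_sqrt _ _ _

variable [DecidableEq n]

theorem PosSemidef.frobenius_norm_sub_one_le {S : Matrix n n ℝ} (hS : S.PosSemidef) :
    ‖S - 1‖ ≤ ‖S * S - 1‖ := by
  set E := S - 1 with hE
  have hEt : Eᵀ = E := by
    rw [hE, transpose_sub, transpose_one, ← conjTranspose_eq_transpose_of_trivial,
      hS.isHermitian.eq]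
  have hexpand : Eᵀ * (S * S - 1) = E * E * S + E * E := by rw [hEt, hE]; noncomm_ring
  have hESE : 0 ≤ (E * E * S).trace := by
    rw [← trace_mul_cycle]
    simpa [conjTranspose_eq_transpose_of_trivial, hEt] using
      (hS.mul_mul_conjTranspose_same E).trace_nonneg
  have hsq : ‖E‖ ^ 2 ≤ ‖E‖ * ‖S * S - 1‖ := calc
    ‖E‖ ^ 2 = (E * E).trace := by rw [frobenius_norm_sq_eq_trace, hEt]
    _ ≤ (Eᵀ * (S * S - 1)).trace := by rw [hexpand, trace_add]; linarith
    _ ≤ ‖E‖ * ‖S * S - 1‖ := trace_transpose_mul_le_frobenius_norm_mul _ _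
  nlinarith [norm_nonneg E, norm_nonneg (S * S - 1)]

end Matrix

-- `(1 / 4 : ℝ) • (A + Aᵀ)` is the paper's `(1/2) sym A`.
/-- For square matrices `A` converging to zero, the symmetric positive-definite square root
of `I + A` satisfies `|(I + A)^{1/2} - I - (1/2) sym A| ≤ C |A|²` (Frobenius norm),
for all `A` with `|A|` sufficiently small.  Here `sym A = (A + Aᵀ)/2`, so
`(1/2) sym A = (1/4) (A + Aᵀ)`. -/
theorem sqrt_quadratic_estimate (d : ℕ) :
    ∃ C > (0 : ℝ), ∃ δ > (0 : ℝ), ∀ A S : Matrix (Fin d) (Fin d) ℝ,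
      A.IsSymm → ‖A‖ < δ → S.IsSymm → S.PosDef → S * S = 1 + A →
      ‖S - 1 - (1 / 4 : ℝ) • (A + Aᵀ)‖ ≤ C * ‖A‖ ^ 2 := by
  refine ⟨1 / 2, by norm_num, 1, one_pos, fun A S hA _ _ hS hSS => ?_⟩
  have hA_eq : A = S * S - 1 := by rw [hSS, add_sub_cancel_left]
  have hS_sub_one : ‖S - 1‖ ≤ ‖A‖ := hA_eq ▸ hS.posSemidef.frobenius_norm_sub_one_le
  have hid : S - 1 - (1 / 4 : ℝ) • (A + Aᵀ) = -((1 / 2 : ℝ) • ((S - 1) * (S - 1))) := by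
    rw [hA.eq, hA_eq]
    simp only [mul_sub, sub_mul, mul_one, one_mul]; module
  calc ‖S - 1 - (1 / 4 : ℝ) • (A + Aᵀ)‖ = 1 / 2 * ‖(S - 1) * (S - 1)‖ := by
        rw [hid, norm_neg, norm_smul]; norm_num
    _ ≤ 1 / 2 * (‖S - 1‖ * ‖S - 1‖) := by gcongr; exact frobenius_norm_mul _ _
    _ ≤ 1 / 2 * ‖A‖ ^ 2 := by rw [sq]; gcongr
end

section
/- For an orientation-preserving invertible matrix A ∈ GL⁺(d,ℝ), the distance from A to SO(d) in Frobenius norm is achieved at the orthogonal polar factor: dist(A, SO(d)) = |A - A(AᵀA)^{-1/2}|. -/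
open Matrix

attribute [local instance] Matrix.frobeniusNormedAddCommGroup Matrix.frobeniusNormedSpace

/-- The special orthogonal group `SO(d)` as a subset of the `d × d` real matrices. -/
def SOd (d : ℕ) : Set (Matrix (Fin d) (Fin d) ℝ) :=
  {Q | Qᵀ * Q = 1 ∧ Q.det = 1}

/-!
Write `R = A S⁻¹`, so that `A = R S` with `R ∈ SO(d)`. Left multiplication by an orthogonal
matrix is a Frobenius isometry, so `|A - Q| = |S - RᵀQ|` for every `Q ∈ SO(d)`, and it suffices
that `1` is the orthogonal matrix nearest to a positive semidefinite `S`. Expanding the square,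
`|S - U|² = |S|² + d - 2 tr (S U)`, and `tr (S U) ≤ tr S` for orthogonal `U`.
-/

namespace Matrix

variable {m n : Type*} [Fintype m] [Fintype n]

theorem frobenius_norm_orthogonal_mul [DecidableEq m] {U : Matrix m m ℝ} (hU : Uᵀ * U = 1)
    (M : Matrix m n ℝ) : ‖U * M‖ = ‖M‖ := by
  rw [← sq_eq_sq₀ (norm_nonneg _) (norm_nonneg _), frobenius_norm_sq_eq_trace,
    frobenius_norm_sq_eq_trace, transpose_mul, Matrix.mul_assoc, ← Matrix.mul_assoc Uᵀ, hU,
    Matrix.one_mul]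

variable [DecidableEq n] {S U : Matrix n n ℝ}

theorem frobenius_norm_sub_orthogonal_sq (M : Matrix n n ℝ) (hU : Uᵀ * U = 1) :
    ‖M - U‖ ^ 2 = ‖M‖ ^ 2 + Fintype.card n - 2 * (Mᵀ * U).trace := by
  have hexpand : (M - U)ᵀ * (M - U) = Mᵀ * M - Mᵀ * U - (Mᵀ * U)ᵀ + Uᵀ * U := by
    rw [transpose_sub, transpose_mul, transpose_transpose]
    noncomm_ring
  rw [frobenius_norm_sq_eq_trace, frobenius_norm_sq_eq_trace, hexpand, hU]
  simp only [trace_add, trace_sub, trace_transpose, trace_one]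
  ring

theorem PosSemidef.trace_mul_orthogonal_le (hS : S.PosSemidef) (hU : Uᵀ * U = 1) :
    (S * U).trace ≤ S.trace := by
  have hSt : Sᵀ = S := hS.isHermitian
  -- `tr S - tr (S U)` is half the trace of the positive semidefinite `(1 - U) S (1 - U)ᵀ`.
  have hconj : ((1 - U) * S * (1 - U)ᵀ).trace = 2 * S.trace - 2 * (S * U).trace := by
    have hexpand : (1 - U) * S * (1 - U)ᵀ = S - U * S - (U * S)ᵀ + U * S * Uᵀ := by
      rw [transpose_sub, transpose_one, transpose_mul, hSt]
      noncomm_ring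
    rw [hexpand, trace_add, trace_sub, trace_sub, trace_transpose, trace_mul_cycle, hU,
      Matrix.one_mul, trace_mul_comm U]
    ring
  have := (hS.mul_mul_conjTranspose_same (1 - U)).trace_nonneg
  rw [conjTranspose_eq_transpose_of_trivial, hconj] at this
  linarith

theorem PosSemidef.norm_sub_one_le_norm_sub_orthogonal (hS : S.PosSemidef)
    (hU : Uᵀ * U = 1) : ‖S - 1‖ ≤ ‖S - U‖ := by
  have hSt : Sᵀ = S := hS.isHermitian
  rw [← sq_le_sq₀ (norm_nonneg _) (norm_nonneg _),
    frobenius_norm_sub_orthogonal_sq S (by simp), frobenius_norm_sub_orthogonal_sq S hU, hSt,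
    Matrix.mul_one]
  linarith [hS.trace_mul_orthogonal_le hU]

variable {A : Matrix n n ℝ}

theorem PosDef.mul_inv_orthogonal_of_mul_self_eq (hS : S.PosDef) (hSA : S * S = Aᵀ * A) :
    (A * S⁻¹)ᵀ * (A * S⁻¹) = 1 := by
  have hSt : Sᵀ = S := hS.isHermitian
  have hunit : IsUnit S.det := hS.det_pos.ne'.isUnit
  rw [transpose_mul, transpose_nonsing_inv, hSt, Matrix.mul_assoc, ← Matrix.mul_assoc Aᵀ, ← hSA,
    Matrix.mul_assoc, mul_nonsing_inv _ hunit, Matrix.mul_one, nonsing_inv_mul _ hunit]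

theorem PosDef.det_mul_inv_of_mul_self_eq (hS : S.PosDef) (hSA : S * S = Aᵀ * A)
    (hA : 0 < A.det) : (A * S⁻¹).det = 1 := by
  have hdet : S.det = A.det := by
    have := congrArg det hSA
    rw [det_mul, det_mul, det_transpose] at this
    nlinarith [hS.det_pos]
  rw [det_mul, det_nonsing_inv, hdet, Ring.inverse_eq_inv', mul_inv_cancel₀ hA.ne']

end Matrix

/-- For an orientation-preserving invertible matrix `A` (i.e. `det A > 0`), the Frobenius
distance from `A` to `SO(d)` is achieved at the orthogonal polar factor:
`dist(A, SO(d)) = |A - A (AᵀA)^{-1/2}|`, where `S` is the symmetric positive-definite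
square root of `AᵀA`. -/
theorem dist_SO_eq_polar (d : ℕ) (A S : Matrix (Fin d) (Fin d) ℝ)
    (hA : 0 < A.det) (hS : S.PosDef) (hSsq : S * S = Aᵀ * A) :
    Metric.infDist A (SOd d) = ‖A - A * S⁻¹‖ := by
  set R := A * S⁻¹ with hR_def
  have hR : R ∈ SOd d :=
    ⟨hS.mul_inv_orthogonal_of_mul_self_eq hSsq, hS.det_mul_inv_of_mul_self_eq hSsq hA⟩
  have hRRt : R * Rᵀ = 1 := mul_eq_one_comm.mp hR.1
  have hA_eq : R * S = A := by
    rw [hR_def, Matrix.mul_assoc, nonsing_inv_mul _ hS.det_pos.ne'.isUnit, Matrix.mul_one]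
  refine le_antisymm (dist_eq_norm A R ▸ Metric.infDist_le_dist_of_mem hR)
    ((Metric.le_infDist ⟨R, hR⟩).2 fun Q hQ => ?_)
  have hRtQ : (Rᵀ * Q)ᵀ * (Rᵀ * Q) = 1 := by
    rw [transpose_mul, transpose_transpose, Matrix.mul_assoc, ← Matrix.mul_assoc R, hRRt,
      Matrix.one_mul, hQ.1]
  calc ‖A - R‖ = ‖R * (S - 1)‖ := by rw [← hA_eq, Matrix.mul_sub, Matrix.mul_one]
    _ = ‖S - 1‖ := frobenius_norm_orthogonal_mul hR.1 _
    _ ≤ ‖S - Rᵀ * Q‖ := hS.posSemidef.norm_sub_one_le_norm_sub_orthogonal hRtQ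
    _ = ‖R * (S - Rᵀ * Q)‖ := (frobenius_norm_orthogonal_mul hR.1 _).symm
    _ = dist A Q := by
      rw [Matrix.mul_sub, ← Matrix.mul_assoc, hRRt, Matrix.one_mul, hA_eq, dist_eq_norm]
end

section
/- For the unit sphere S^d ⊂ ℝ^{d+1} and any map f with measurable differential, the pointwise distance of the thickened differential from orientation-preserving isometries is controlled by that of df: at each point (p,r) with r ∈ (1/2,2), dist(d(Φ∘f̃), SO(s̃, e)) ≤ 2·dist(df, SO(s, f*s)), where f̃(p,r) = (f(p),r) and Φ(p,r) = rκ(p). -/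
open Set

open scoped RealInnerProductSpace

noncomputable section

variable (d : ℕ)

local notation "E" => EuclideanSpace ℝ (Fin (d + 1))

/-- Norm of a linear map restricted to the tangent space `T_p S^d = p^⊥`. -/
def tanNorm (p : EuclideanSpace ℝ (Fin (d + 1)))
    (L : EuclideanSpace ℝ (Fin (d + 1)) →ₗ[ℝ] EuclideanSpace ℝ (Fin (d + 1))) : ℝ :=
  sSup {x : ℝ | ∃ v : EuclideanSpace ℝ (Fin (d + 1)), ⟪p, v⟫ = 0 ∧ ‖v‖ ≤ 1 ∧ x = ‖L v‖}

/-- Norm of a linear map on the warped-product tangent space `(T_p S^d × ℝ, s̃)`,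
where `|(v, t)|²_{s̃} = r² |v|² + t²`. -/
def warpNorm (p : EuclideanSpace ℝ (Fin (d + 1))) (r : ℝ)
    (L : EuclideanSpace ℝ (Fin (d + 1)) × ℝ →ₗ[ℝ] EuclideanSpace ℝ (Fin (d + 1))) : ℝ :=
  sSup {x : ℝ | ∃ (v : EuclideanSpace ℝ (Fin (d + 1))) (t : ℝ),
    ⟪p, v⟫ = 0 ∧ r ^ 2 * ‖v‖ ^ 2 + t ^ 2 ≤ 1 ∧ x = ‖L (v, t)‖}

/-! Every isometry `R` of `T_pS^d` onto `T_qS^d` thickens to `(v, t) ↦ t q + r R v`,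
which is an isometry of the warped product `(T_pS^d × ℝ, s̃)` onto `ℝ^{d+1}` because `q ⟂ R v`.
Its difference from `d(Φ∘f̃)(v, t) = t q + r df(v)` is `(df - R)(r v)`, and `‖r v‖ ≤ 1` on the
`s̃`-unit ball, so the warped distance is at most the tangential one. -/

lemma tanNorm_nonneg (p : E) (L : E →ₗ[ℝ] E) : 0 ≤ tanNorm d p L :=
  Real.sSup_nonneg <| by rintro _ ⟨v, -, -, rfl⟩; exact norm_nonneg _

lemma norm_apply_le_tanNorm (p : E) (L : E →ₗ[ℝ] E) {v : E} (hpv : ⟪p, v⟫ = 0)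
    (hv : ‖v‖ ≤ 1) : ‖L v‖ ≤ tanNorm d p L := by
  refine le_csSup ⟨‖LinearMap.toContinuousLinearMap L‖, ?_⟩ ⟨v, hpv, hv, rfl⟩
  rintro _ ⟨w, -, hw, rfl⟩
  simpa using (LinearMap.toContinuousLinearMap L).le_of_opNorm_le_of_le le_rfl hw

lemma warpNorm_nonneg (p : E) (r : ℝ) (L : E × ℝ →ₗ[ℝ] E) : 0 ≤ warpNorm d p r L :=
  Real.sSup_nonneg <| by rintro _ ⟨v, t, -, -, rfl⟩; exact norm_nonneg _

lemma warpNorm_le_tanNorm {p : E} {r : ℝ} {L : E × ℝ →ₗ[ℝ] E} {M : E →ₗ[ℝ] E}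
    (hLM : ∀ v t, L (v, t) = M (r • v)) : warpNorm d p r L ≤ tanNorm d p M := by
  refine Real.sSup_le ?_ (tanNorm_nonneg d p M)
  rintro _ ⟨v, t, hpv, hvt, rfl⟩
  have hrv : ‖r • v‖ ^ 2 ≤ 1 := by
    rw [norm_smul, mul_pow, Real.norm_eq_abs, sq_abs]
    nlinarith [sq_nonneg t]
  rw [hLM]
  exact norm_apply_le_tanNorm d p M (by rw [inner_smul_right, hpv, mul_zero])
    (pow_le_one_iff_of_nonneg (norm_nonneg _) two_ne_zero |>.mp hrv)

section InnerProductSpace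

variable {U V : Type*} [NormedAddCommGroup V] [InnerProductSpace ℝ V] [AddCommGroup U]
  [Module ℝ U]

/-- With `q = f p` and `L = df_p`, this is `d(Φ∘f̃)` at `(p, r)`. -/
def thicken (q : V) (r : ℝ) (L : U →ₗ[ℝ] V) : U × ℝ →ₗ[ℝ] V :=
  (LinearMap.snd ℝ U ℝ).smulRight q + r • (L ∘ₗ LinearMap.fst ℝ U ℝ)

@[simp]
lemma thicken_apply (q : V) (r : ℝ) (L : U →ₗ[ℝ] V) (v : U) (t : ℝ) :
    thicken q r L (v, t) = t • q + r • L v := rfl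

lemma thicken_sub_thicken_apply (q : V) (r : ℝ) (L M : U →ₗ[ℝ] V) (v : U) (t : ℝ) :
    (thicken q r L - thicken q r M) (v, t) = (L - M) (r • v) := by
  simp [smul_sub]

lemma inner_thicken_apply_thicken_apply {q : V} (hq : ‖q‖ = 1) (r : ℝ) (L : U →ₗ[ℝ] V)
    {v w : U} (hv : ⟪q, L v⟫ = 0) (hw : ⟪q, L w⟫ = 0) (t u : ℝ) :
    ⟪thicken q r L (v, t), thicken q r L (w, u)⟫ = r ^ 2 * ⟪L v, L w⟫ + t * u := by
  have hqq : ⟪q, q⟫ = 1 := by rw [real_inner_self_eq_norm_sq, hq, one_pow]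
  simp only [thicken_apply, inner_add_left, inner_add_right, real_inner_smul_left,
    real_inner_smul_right, hqq, hw, real_inner_comm q (L v) ▸ hv]
  ring

lemma exists_orthogonal_isometry {p q : V} (hpq : ‖p‖ = ‖q‖) :
    ∃ R : V →ₗ[ℝ] V, (∀ v, ⟪p, v⟫ = 0 → ⟪q, R v⟫ = 0) ∧
      ∀ v w, ⟪p, v⟫ = 0 → ⟪p, w⟫ = 0 → ⟪R v, R w⟫ = ⟪v, w⟫ := by
  set R := Submodule.reflection (ℝ ∙ (p - q))ᗮ
  have hRp : R p = q := Submodule.reflection_sub hpq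
  refine ⟨R.toLinearEquiv.toLinearMap, fun v hv => ?_, fun v w _ _ => R.inner_map_map v w⟩
  rw [← hRp]
  exact (R.inner_map_map p v).trans hv

end InnerProductSpace

theorem thickened_dist_le (p q : EuclideanSpace ℝ (Fin (d + 1)))
    (hp : ‖p‖ = 1) (hq : ‖q‖ = 1) (r : ℝ)
    (Dm : EuclideanSpace ℝ (Fin (d + 1)) →ₗ[ℝ] EuclideanSpace ℝ (Fin (d + 1))) :
    sInf {ρ : ℝ | ∃ J : EuclideanSpace ℝ (Fin (d + 1)) × ℝ →ₗ[ℝ]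
          EuclideanSpace ℝ (Fin (d + 1)),
        (∀ (v w : EuclideanSpace ℝ (Fin (d + 1))) (t u : ℝ), ⟪p, v⟫ = 0 → ⟪p, w⟫ = 0 →
          ⟪J (v, t), J (w, u)⟫ = r ^ 2 * ⟪v, w⟫ + t * u) ∧
        ρ = warpNorm d p r
          ((((LinearMap.snd ℝ (EuclideanSpace ℝ (Fin (d + 1))) ℝ).smulRight q) +
            r • (Dm ∘ₗ LinearMap.fst ℝ (EuclideanSpace ℝ (Fin (d + 1))) ℝ)) - J)}
      ≤ 2 * sInf {ρ : ℝ | ∃ R : EuclideanSpace ℝ (Fin (d + 1)) →ₗ[ℝ]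
          EuclideanSpace ℝ (Fin (d + 1)),
        (∀ v, ⟪p, v⟫ = 0 → ⟪q, R v⟫ = 0) ∧
        (∀ v w, ⟪p, v⟫ = 0 → ⟪p, w⟫ = 0 → ⟪R v, R w⟫ = ⟪v, w⟫) ∧
        ρ = tanNorm d p (Dm - R)} := by
  obtain ⟨R₀, hR₀q, hR₀iso⟩ := exists_orthogonal_isometry (hp.trans hq.symm)
  refine le_trans ?_ (le_mul_of_one_le_left (Real.sInf_nonneg ?_) one_le_two)
  · refine le_csInf ⟨_, R₀, hR₀q, hR₀iso, rfl⟩ ?_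
    rintro _ ⟨R, hRq, hRiso, rfl⟩
    refine le_trans ?_ (warpNorm_le_tanNorm d (thicken_sub_thicken_apply q r Dm R))
    refine csInf_le ⟨0, ?_⟩ ⟨thicken q r R, ?_, rfl⟩
    · rintro _ ⟨J, -, rfl⟩
      exact warpNorm_nonneg d p r _
    · intro v w t u hv hw
      rw [inner_thicken_apply_thicken_apply hq r R (hRq v hv) (hRq w hw), hRiso v w hv hw]
  · rintro _ ⟨R, -, -, rfl⟩
    exact tanNorm_nonneg d p _

end
end
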